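/- In the setting of the previous lemma (the cone C ⊆ ℝ_{≥0}^k × ℝ^n containing e_1,…,e_k with π_n(C) = ℝ^n; points x_1,…,x_m ∈ C; index sets J_1,…,J_p of cardinality n; subcones C_i = conic hull({e_1,…,e_k} ∪ {x_j : j ∈ J_i}) and D_i = conic hull({π_n(x_j) : j ∈ J_i}); hypotheses C = ∪_i C_i and {D_i} a sector decomposition of ℝ^n by full sectors), assume in addition: whenever D_i ∩ D_ℓ is a wall in ℝ^n, the index set intersection J_i ∩ J_ℓ has exactly n−1 elements and D_i ∩ D_ℓ = conic hull({π_n(x_j) : j ∈ J_i ∩ J_ℓ}). Then for all distinct i, ℓ: the intersection C_i ∩ C_ℓ is a wall in ℝ^k × ℝ^n (a cone of dimension k+n−1) if and only if D_i ∩ D_ℓ is a wall in ℝ^n; and in that case C_i ∩ C_ℓ = conic hull({e_1,…,e_k} ∪ {x_j : j ∈ J_i ∩ J_ℓ}). Consequently W ↦ π_n(W) is a one-to-one correspondence between the walls of {C_i} in C and the walls of {D_i} in ℝ^n. -/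

import Mathlib

noncomputable section

/-- The conic hull of a set `S`: all finite nonnegative real linear combinations
of elements of `S`. -/
def coneHull {V : Type*} [AddCommGroup V] [Module ℝ V] (S : Set V) : Set V :=
  { x | ∃ (n : ℕ) (c : Fin n → ℝ) (v : Fin n → V),
      (∀ i, 0 ≤ c i) ∧ (∀ i, v i ∈ S) ∧ x = ∑ i, c i • v i }

/-- A cone is the conic hull of a finite set. -/
def IsCone {V : Type*} [AddCommGroup V] [Module ℝ V] (C : Set V) : Prop :=
  ∃ S : Finset V, C = coneHull (S : Set V)

/-- The dimension of a cone: the dimension of its linear span. -/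
def coneDim {V : Type*} [AddCommGroup V] [Module ℝ V] (C : Set V) : ℕ :=
  Module.finrank ℝ (Submodule.span ℝ C)

/-- The rank of a cone: the minimum cardinality of a finite generating set. -/
def coneRank {V : Type*} [AddCommGroup V] [Module ℝ V] (C : Set V) : ℕ :=
  sInf { r : ℕ | ∃ S : Finset V, S.card = r ∧ C = coneHull (S : Set V) }

/-- A full cone: a cone whose dimension equals the ambient dimension. -/
def IsFullCone {V : Type*} [AddCommGroup V] [Module ℝ V] (C : Set V) : Prop :=
  IsCone C ∧ coneDim C = Module.finrank ℝ V

/-- A sector: a cone whose rank equals its dimension. -/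
def IsSector {V : Type*} [AddCommGroup V] [Module ℝ V] (C : Set V) : Prop :=
  IsCone C ∧ coneRank C = coneDim C

/-- A sector decomposition of a full cone `C`: a finite family of subcones, each a full
sector, whose union is `C`, with pairwise intersections of empty interior. -/
def IsSectorDecomposition {V : Type*} [AddCommGroup V] [Module ℝ V] [TopologicalSpace V]
    {p : ℕ} (C : Set V) (F : Fin p → Set V) : Prop :=
  (∀ i, F i ⊆ C) ∧ (∀ i, IsSector (F i) ∧ IsFullCone (F i)) ∧
  (C = ⋃ i, F i) ∧ ∀ i j, i ≠ j → interior (F i ∩ F j) = ∅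

/-- The intersection of two cones is a wall (of dimension `d`, one less than the ambient
dimension) if it is a cone of dimension `d`. -/
def IsWallDim {V : Type*} [AddCommGroup V] [Module ℝ V] (C C' : Set V) (d : ℕ) : Prop :=
  IsCone (C ∩ C') ∧ coneDim (C ∩ C') = d

/-!
Since every `x_j` has nonnegative first component, a point of `D_i ∩ D_ℓ` lifts to `C_i ∩ C_ℓ`:
add to its lift in `C_i` the first component of its lift in `C_ℓ` (a point of the cone spanned
by `e_1, …, e_k`). So `π_n (C_i ∩ C_ℓ) = D_i ∩ D_ℓ`, and as `C_i ∩ C_ℓ` contains the `e_a`, its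
span is `ℝ^k × span (D_i ∩ D_ℓ)`: the dimensions differ by exactly `k`.

As `D_i` is full and generated by `n` vectors, the `π_n(x_j)`, `j ∈ J_i`, are linearly
independent, so the coefficients of a point of `C_i` are read off from its projection; when
`D_i ∩ D_ℓ` is generated by the `π_n(x_j)`, `j ∈ J_i ∩ J_ℓ`, the other coefficients vanish.

Finally a wall of `{D_i}` determines its two sectors: if three full cones contained a wall
spanning the hyperplane `ker φ`, two of them would lie on the same side of it, and their
intersection would have nonempty interior.
-/

open Submodule

def Submodule.prodEquivProd {R M M₂ : Type*} [Semiring R] [AddCommMonoid M] [AddCommMonoid M₂]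
    [Module R M] [Module R M₂] (p : Submodule R M) (q : Submodule R M₂) :
    p.prod q ≃ₗ[R] p × q where
  toFun z := (⟨z.1.1, z.2.1⟩, ⟨z.1.2, z.2.2⟩)
  invFun z := ⟨(z.1, z.2), z.1.2, z.2.2⟩
  left_inv _ := rfl
  right_inv _ := rfl
  map_add' _ _ := rfl
  map_smul' _ _ := rfl

theorem Submodule.finrank_prod {K M M₂ : Type*} [DivisionRing K] [AddCommGroup M]
    [AddCommGroup M₂] [Module K M] [Module K M₂] (p : Submodule K M) (q : Submodule K M₂)
    [FiniteDimensional K p] [FiniteDimensional K q] :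
    Module.finrank K (p.prod q) = Module.finrank K p + Module.finrank K q := by
  rw [(prodEquivProd p q).finrank_eq, Module.finrank_prod]

theorem span_eq_top_prod_span_image_snd {A B : Type*} [AddCommGroup A] [Module ℝ A]
    [AddCommGroup B] [Module ℝ B] {W : Set (A × B)} (hW : ∀ a : A, (a, 0) ∈ span ℝ W) :
    span ℝ W = (⊤ : Submodule ℝ A).prod (span ℝ (Prod.snd '' W)) := by
  refine le_antisymm (span_le.2 fun z hz => ⟨trivial, subset_span ⟨z, hz, rfl⟩⟩) ?_
  rintro ⟨a, b⟩ ⟨-, hb⟩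
  have hmap : (span ℝ W).map (LinearMap.snd ℝ A B) = span ℝ (Prod.snd '' W) := map_span _ _
  rw [← hmap] at hb
  obtain ⟨w, hw, rfl⟩ := hb
  have : (a, (LinearMap.snd ℝ A B) w) = (a - w.1, 0) + w := by ext <;> simp
  rw [this]
  exact add_mem (hW _) hw

theorem Submodule.exists_dual_ker_eq_of_finrank_add_one {K E : Type*} [Field K] [AddCommGroup E]
    [Module K E] [FiniteDimensional K E] {H : Submodule K E}
    (hH : Module.finrank K H + 1 = Module.finrank K E) :
    ∃ φ : Module.Dual K E, φ ≠ 0 ∧ LinearMap.ker φ = H := by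
  have hlt : H < ⊤ := lt_top_iff_ne_top.2 fun h => by rw [h, finrank_top] at hH; omega
  obtain ⟨φ, hφ, hmap⟩ := H.exists_dual_map_eq_bot_of_lt_top hlt inferInstance
  have hker := Module.Dual.finrank_ker_add_one_of_ne_zero hφ
  exact ⟨φ, hφ, (eq_of_le_of_finrank_eq (LinearMap.le_ker_iff_map.2 hmap) (by omega)).symm⟩

theorem linearIndepOn_of_finrank_span_eq_card {K E ι : Type*} [DivisionRing K] [AddCommGroup E]
    [Module K E] {v : ι → E} {s : Finset ι}
    (h : Module.finrank K (span K (v '' s)) = s.card) : LinearIndepOn K v s := by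
  rw [LinearIndepOn, linearIndependent_iff_card_eq_finrank_span, Set.finrank,
    ← Set.image_eq_range, h]
  simp

section Cones

variable {V W : Type*} [AddCommGroup V] [Module ℝ V] [AddCommGroup W] [Module ℝ W]

theorem coneHull_eq_hull (S : Set V) : coneHull S = (PointedCone.hull ℝ S : Set V) := by
  ext y
  rw [SetLike.mem_coe, mem_span_set']
  constructor
  · rintro ⟨N, c, v, hc, hv, rfl⟩
    exact ⟨N, fun i => ⟨c i, hc i⟩, fun i => ⟨v i, hv i⟩, rfl⟩
  · rintro ⟨N, c, v, rfl⟩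
    exact ⟨N, fun i => c i, fun i => v i, fun i => (c i).2, fun i => (v i).2, rfl⟩

theorem image_coneHull (f : V →ₗ[ℝ] W) (S : Set V) : f '' coneHull S = coneHull (f '' S) := by
  rw [coneHull_eq_hull, coneHull_eq_hull, ← PointedCone.coe_map, PointedCone.map, map_span]
  rfl

theorem IsCone.image {C : Set V} (hC : IsCone C) (f : V →ₗ[ℝ] W) : IsCone (f '' C) := by
  classical
  obtain ⟨S, rfl⟩ := hC
  exact ⟨S.image f, by rw [image_coneHull, Finset.coe_image]⟩

theorem coneDim_coneHull (S : Set V) : coneDim (coneHull S) = Module.finrank ℝ (span ℝ S) := by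
  rw [coneDim, coneHull_eq_hull, span_span_of_tower]

theorem mem_hull_image_finset_iff {ι : Type*} {x : ι → V} {s : Finset ι} {y : V} :
    y ∈ PointedCone.hull ℝ (x '' s) ↔
      ∃ c : ι → ℝ, 0 ≤ c ∧ (∀ j ∉ s, c j = 0) ∧ ∑ j ∈ s, c j • x j = y := by
  classical
  constructor
  · intro hy
    induction hy using span_induction with
    | mem y hy =>
      obtain ⟨j, hj, rfl⟩ := hy
      refine ⟨Pi.single j 1, Pi.single_nonneg.2 zero_le_one, fun i hi => ?_, ?_⟩
      · exact Pi.single_eq_of_ne (by rintro rfl; exact hi hj) _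
      · simp [Pi.single_apply, Finset.mem_coe.1 hj]
    | zero => exact ⟨0, le_rfl, fun _ _ => rfl, by simp⟩
    | add y z _ _ hy hz =>
      obtain ⟨c, hc, hcs, rfl⟩ := hy
      obtain ⟨d, hd, hds, rfl⟩ := hz
      exact ⟨c + d, add_nonneg hc hd, fun j hj => by simp [hcs j hj, hds j hj],
        by simp [add_smul, Finset.sum_add_distrib]⟩
    | smul r y _ hy =>
      obtain ⟨c, hc, hcs, rfl⟩ := hy
      exact ⟨(r : ℝ) • c, smul_nonneg r.2 hc, fun j hj => by simp [hcs j hj],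
        by simp [Finset.smul_sum, mul_smul]⟩
  · rintro ⟨c, hc, -, rfl⟩
    exact sum_mem fun j hj => (PointedCone.hull ℝ _).smul_mem (hc j) (subset_span ⟨j, hj, rfl⟩)

theorem mem_hull_image_of_map_mem {ι : Type*} {x : ι → V} (f : V →ₗ[ℝ] W) {s t : Finset ι}
    (hts : t ⊆ s) (hli : LinearIndepOn ℝ (f ∘ x) s) {y : V} (hy : y ∈ PointedCone.hull ℝ (x '' s))
    (hfy : f y ∈ PointedCone.hull ℝ ((f ∘ x) '' t)) : y ∈ PointedCone.hull ℝ (x '' t) := by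
  obtain ⟨c, -, -, rfl⟩ := mem_hull_image_finset_iff.1 hy
  obtain ⟨d, hd, hdt, hfd⟩ := mem_hull_image_finset_iff.1 hfy
  rw [Finset.sum_subset hts fun j _ hj => by rw [hdt j hj, zero_smul], map_sum] at hfd
  simp only [Function.comp_apply, map_smul] at hfd
  have hcd : ∀ j ∈ s, (c - d) j = 0 :=
    linearIndepOn_finset_iff.1 hli (c - d) (by simp [sub_smul, Finset.sum_sub_distrib, hfd])
  rw [Finset.sum_congr rfl fun j hj => by rw [sub_eq_zero.1 (hcd j hj)],
    ← Finset.sum_subset hts fun j _ hj => by rw [hdt j hj, zero_smul]]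
  exact mem_hull_image_finset_iff.2 ⟨d, hd, hdt, rfl⟩

theorem PointedCone.exists_sub_eq_of_mem_span (C : PointedCone ℝ V) {w : V}
    (hw : w ∈ span ℝ (C : Set V)) :
    ∃ a ∈ C, ∃ b ∈ C, a - b = w := by
  induction hw using span_induction with
  | mem w hw => exact ⟨w, hw, 0, C.zero_mem, sub_zero w⟩
  | zero => exact ⟨0, C.zero_mem, 0, C.zero_mem, sub_zero 0⟩
  | add w w' _ _ h h' =>
    obtain ⟨a, ha, b, hb, rfl⟩ := h
    obtain ⟨a', ha', b', hb', rfl⟩ := h'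
    exact ⟨a + a', C.add_mem ha ha', b + b', C.add_mem hb hb', by abel⟩
  | smul r w _ h =>
    obtain ⟨a, ha, b, hb, rfl⟩ := h
    rcases le_total 0 r with hr | hr
    · exact ⟨r • a, C.smul_mem hr ha, r • b, C.smul_mem hr hb, (smul_sub r a b).symm⟩
    · refine ⟨(-r) • b, C.smul_mem (neg_nonneg.2 hr) hb, (-r) • a,
        C.smul_mem (neg_nonneg.2 hr) ha, ?_⟩
      rw [← smul_sub, neg_smul, ← smul_neg, neg_sub]

end Cones

section Lift

variable {k : ℕ} {V ι : Type*} [AddCommGroup V] [Module ℝ V]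

/-- For `s = J_i`, `liftCone x s` and `baseCone x s` are the cones `C_i` and `D_i`. -/
def liftCone (x : ι → (Fin k → ℝ) × V) (s : Set ι) : Set ((Fin k → ℝ) × V) :=
  coneHull (Set.range (fun a : Fin k => ((Pi.single a 1 : Fin k → ℝ), (0 : V))) ∪ x '' s)

def baseCone (x : ι → (Fin k → ℝ) × V) (s : Set ι) : Set V :=
  coneHull ((fun j => (x j).2) '' s)

variable {x : ι → (Fin k → ℝ) × V}

theorem sum_smul_single_zero (a : Fin k → ℝ) :
    ∑ r, a r • ((Pi.single r 1 : Fin k → ℝ), (0 : V)) = (a, 0) := by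
  ext r <;> simp [Prod.fst_sum, Prod.snd_sum, Finset.sum_apply, Pi.single_apply]

theorem hull_range_single_zero :
    PointedCone.hull ℝ (Set.range fun a : Fin k => ((Pi.single a 1 : Fin k → ℝ), (0 : V))) =
      (PointedCone.positive ℝ (Fin k → ℝ)).prod ⊥ := by
  refine le_antisymm (span_le.2 ?_) ?_
  · rintro _ ⟨a, rfl⟩
    exact ⟨Pi.single_nonneg.2 zero_le_one, rfl⟩
  · rintro ⟨a, b⟩ ⟨ha, hb⟩
    obtain rfl : b = 0 := hb
    rw [← sum_smul_single_zero]
    exact sum_mem fun r _ => (PointedCone.hull ℝ _).smul_mem (ha r) (subset_span ⟨r, rfl⟩)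

theorem mem_liftCone_iff {s : Set ι} {z : (Fin k → ℝ) × V} :
    z ∈ liftCone x s ↔ ∃ a, 0 ≤ a ∧ ∃ y ∈ PointedCone.hull ℝ (x '' s), (a, 0) + y = z := by
  rw [liftCone, coneHull_eq_hull, SetLike.mem_coe, PointedCone.hull, span_union,
    ← PointedCone.hull, hull_range_single_zero, mem_sup]
  constructor
  · rintro ⟨⟨a, b⟩, ⟨ha, rfl⟩, y, hy, rfl⟩
    exact ⟨a, ha, y, hy, rfl⟩
  · rintro ⟨a, ha, y, hy, rfl⟩
    exact ⟨(a, 0), ⟨ha, rfl⟩, y, hy, rfl⟩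

theorem isCone_liftCone (s : Finset ι) : IsCone (liftCone x s) := by
  classical
  exact ⟨Finset.univ.image (fun a : Fin k => ((Pi.single a 1 : Fin k → ℝ), (0 : V))) ∪ s.image x,
    by simp [liftCone]⟩

theorem liftCone_mono {s t : Set ι} (hst : s ⊆ t) : liftCone x s ⊆ liftCone x t := by
  simp only [liftCone, coneHull_eq_hull]
  exact span_mono (Set.union_subset_union_right _ (Set.image_mono hst))

theorem single_mem_liftCone (s : Set ι) (a : Fin k) :
    ((Pi.single a 1 : Fin k → ℝ), (0 : V)) ∈ liftCone x s := by
  rw [liftCone, coneHull_eq_hull]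
  exact subset_span (Or.inl ⟨a, rfl⟩)

theorem baseCone_eq_image_snd (s : Set ι) : baseCone x s = Prod.snd '' coneHull (x '' s) := by
  have h := image_coneHull (LinearMap.snd ℝ (Fin k → ℝ) V) (x '' s)
  rw [LinearMap.coe_snd, Set.image_image] at h
  exact h.symm

theorem snd_mem_baseCone {s : Set ι} {z : (Fin k → ℝ) × V} (hz : z ∈ liftCone x s) :
    z.2 ∈ baseCone x s := by
  obtain ⟨a, -, y, hy, rfl⟩ := mem_liftCone_iff.1 hz
  rw [baseCone_eq_image_snd, coneHull_eq_hull]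
  exact ⟨y, hy, by simp⟩

theorem fst_nonneg_of_mem_hull (hx : ∀ j, 0 ≤ (x j).1) {s : Set ι} {y : (Fin k → ℝ) × V}
    (hy : y ∈ PointedCone.hull ℝ (x '' s)) : 0 ≤ y.1 :=
  (span_le.2 (by rintro _ ⟨j, -, rfl⟩; exact ⟨hx j, trivial⟩) hy :
    y ∈ (PointedCone.positive ℝ (Fin k → ℝ)).prod ⊤).1

theorem image_snd_liftCone_inter (hx : ∀ j, 0 ≤ (x j).1) (s t : Set ι) :
    Prod.snd '' (liftCone x s ∩ liftCone x t) = baseCone x s ∩ baseCone x t := by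
  refine subset_antisymm ?_ ?_
  · rintro _ ⟨z, ⟨hs, ht⟩, rfl⟩
    exact ⟨snd_mem_baseCone hs, snd_mem_baseCone ht⟩
  · rintro v ⟨hs, ht⟩
    rw [baseCone_eq_image_snd, coneHull_eq_hull] at hs ht
    obtain ⟨y, hy, rfl⟩ := hs
    obtain ⟨y', hy', hyy'⟩ := ht
    -- `(y'.1, 0) + y = (y.1, 0) + y'` lies in both cones
    refine ⟨(y'.1, 0) + y, ⟨?_, ?_⟩, by simp⟩
    · exact mem_liftCone_iff.2 ⟨_, fst_nonneg_of_mem_hull hx hy', y, hy, rfl⟩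
    · refine mem_liftCone_iff.2 ⟨_, fst_nonneg_of_mem_hull hx hy, y', hy', ?_⟩
      ext <;> simp [add_comm, hyy']

theorem coneDim_liftCone_inter [FiniteDimensional ℝ V] (hx : ∀ j, 0 ≤ (x j).1) (s t : Set ι) :
    coneDim (liftCone x s ∩ liftCone x t) = k + coneDim (baseCone x s ∩ baseCone x t) := by
  have hE (a : Fin k → ℝ) : (a, 0) ∈ span ℝ (liftCone x s ∩ liftCone x t) := by
    rw [← sum_smul_single_zero]
    exact sum_mem fun r _ => smul_mem _ _
      (subset_span ⟨single_mem_liftCone s r, single_mem_liftCone t r⟩)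
  rw [coneDim, span_eq_top_prod_span_image_snd hE, Submodule.finrank_prod, finrank_top,
    Module.finrank_fin_fun, image_snd_liftCone_inter hx]
  rfl

theorem liftCone_inter_eq [DecidableEq ι] {s t : Finset ι}
    (hli : LinearIndepOn ℝ (fun j => (x j).2) s)
    (hst : baseCone x s ∩ baseCone x t ⊆ baseCone x ↑(s ∩ t)) :
    liftCone x s ∩ liftCone x t = liftCone x ↑(s ∩ t) := by
  refine subset_antisymm ?_ (Set.subset_inter (liftCone_mono (by simp)) (liftCone_mono (by simp)))
  rintro z ⟨hs, ht⟩
  have hz := hst ⟨snd_mem_baseCone hs, snd_mem_baseCone ht⟩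
  obtain ⟨a, ha, y, hy, rfl⟩ := mem_liftCone_iff.1 hs
  refine mem_liftCone_iff.2 ⟨a, ha, y, ?_, rfl⟩
  refine mem_hull_image_of_map_mem (LinearMap.snd ℝ _ V) Finset.inter_subset_left hli hy ?_
  simpa [baseCone, coneHull_eq_hull] using hz

theorem isWallDim_liftCone_iff [FiniteDimensional ℝ V] (hx : ∀ j, 0 ≤ (x j).1) {s t : Set ι}
    {d : ℕ} (hd : 0 < d)
    (hcone : IsWallDim (baseCone x s) (baseCone x t) (d - 1) →
      IsCone (liftCone x s ∩ liftCone x t)) :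
    IsWallDim (liftCone x s) (liftCone x t) (k + d - 1) ↔
      IsWallDim (baseCone x s) (baseCone x t) (d - 1) := by
  unfold IsWallDim
  rw [coneDim_liftCone_inter hx]
  refine ⟨fun ⟨hC, hdim⟩ => ⟨?_, by omega⟩, fun hD => ⟨hcone hD, by omega⟩⟩
  simpa only [LinearMap.coe_snd, image_snd_liftCone_inter hx] using hC.image (LinearMap.snd ℝ _ V)

end Lift

section Sectors

variable {V : Type*} [NormedAddCommGroup V] [NormedSpace ℝ V] [FiniteDimensional ℝ V]

theorem PointedCone.interior_nonempty_of_span_eq_top (C : PointedCone ℝ V)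
    (h : span ℝ (C : Set V) = ⊤) : (interior (C : Set V)).Nonempty := by
  refine C.convex.interior_nonempty_iff_affineSpan_eq_top.2 ?_
  have hC := affineSpan_insert_zero (k := ℝ) (C : Set V)
  rwa [Set.insert_eq_of_mem C.zero_mem, h, top_coe, AffineSubspace.coe_eq_univ_iff] at hC

theorem PointedCone.interior_inf_nonempty {F D₁ D₂ : PointedCone ℝ V} (hF : F ≤ D₁ ⊓ D₂)
    (φ : Module.Dual ℝ V) (hφ : LinearMap.ker φ = span ℝ (F : Set V)) {d₁ d₂ : V}
    (hd₁ : d₁ ∈ D₁) (hd₂ : d₂ ∈ D₂) (h : 0 < φ d₁ * φ d₂) :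
    (interior (↑(D₁ ⊓ D₂) : Set V)).Nonempty := by
  -- Rescaled to the same value of `φ`, `a - b = g₁ - g₂` with `gᵢ ∈ F`, so `a + g₂ = b + g₁`
  -- is a common point of `D₁` and `D₂` off the hyperplane `ker φ = span F`.
  set a := |φ d₂| • d₁
  set b := |φ d₁| • d₂
  have hab : φ a = φ b := by
    rcases pos_and_pos_or_neg_and_neg_of_mul_pos h with ⟨h₁, h₂⟩ | ⟨h₁, h₂⟩ <;>
      simp [a, b, abs_of_pos, abs_of_neg, h₁, h₂, mul_comm]
  have ha : φ a ≠ 0 := by simp [a, (left_ne_zero_of_mul h.ne'), (right_ne_zero_of_mul h.ne')]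
  have hF0 : ∀ g ∈ F, φ g = 0 := fun g hg => by
    rw [← LinearMap.mem_ker, hφ]; exact Submodule.subset_span hg
  obtain ⟨g₁, hg₁, g₂, hg₂, hg⟩ :=
    F.exists_sub_eq_of_mem_span (hφ ▸ (show a - b ∈ LinearMap.ker φ by simp [hab]))
  have hq : a + g₂ = g₁ + b := sub_eq_sub_iff_add_eq_add.1 hg.symm
  have hq₁ : a + g₂ ∈ D₁ := D₁.add_mem (D₁.smul_mem (abs_nonneg _) hd₁) (hF hg₂).1
  have hq₂ : a + g₂ ∈ D₂ := hq ▸ D₂.add_mem (hF hg₁).2 (D₂.smul_mem (abs_nonneg _) hd₂)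
  have hφq : φ (a + g₂) ≠ 0 := by rwa [map_add, hF0 g₂ hg₂, add_zero]
  refine (D₁ ⊓ D₂).interior_nonempty_of_span_eq_top (eq_top_iff.2 ?_)
  rw [← LinearMap.span_singleton_sup_ker_eq_top φ hφq, hφ]
  exact sup_le (span_le.2 (Set.singleton_subset_iff.2 (Submodule.subset_span ⟨hq₁, hq₂⟩)))
    (span_mono fun g hg => hF hg)

theorem PointedCone.eq_or_eq_of_inf_le {ι : Type*} {D : ι → PointedCone ℝ V}
    (hspan : ∀ i, span ℝ (D i : Set V) = ⊤)
    (hint : Pairwise fun i j => interior (↑(D i ⊓ D j) : Set V) = ∅) {a b c : ι}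
    (hab : Module.finrank ℝ (span ℝ (↑(D a ⊓ D b) : Set V)) + 1 = Module.finrank ℝ V)
    (hc : D a ⊓ D b ≤ D c) : c = a ∨ c = b := by
  obtain ⟨φ, hφ, hker⟩ := exists_dual_ker_eq_of_finrank_add_one hab
  have hoff (i : ι) : ∃ d ∈ D i, φ d ≠ 0 := by
    by_contra! h
    exact hφ (LinearMap.ker_eq_top.1 (top_le_iff.1 (hspan i ▸ span_le.2 h)))
  have hsame {i j : ι} (hij : i ≠ j) (hle : D a ⊓ D b ≤ D i ⊓ D j) {di dj : V} (hdi : di ∈ D i)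
      (hdj : dj ∈ D j) : ¬ 0 < φ di * φ dj := fun h =>
    (interior_inf_nonempty hle φ hker hdi hdj h).ne_empty (hint hij)
  obtain ⟨da, hda, ha⟩ := hoff a
  obtain ⟨db, hdb, hb⟩ := hoff b
  obtain ⟨dc, hdc, hc'⟩ := hoff c
  by_contra! hne
  have hab' : a ≠ b := by
    rintro rfl
    rw [inf_idem, hspan, finrank_top] at hab
    omega
  have hsign : 0 < φ da * φ db ∨ 0 < φ da * φ dc ∨ 0 < φ db * φ dc := by
    rcases ha.lt_or_gt with h₁ | h₁ <;> rcases hb.lt_or_gt with h₂ | h₂ <;>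
      rcases hc'.lt_or_gt with h₃ | h₃ <;> simp [mul_pos_of_neg_of_neg, *]
  rcases hsign with h | h | h
  · exact hsame hab' le_rfl hda hdb h
  · exact hsame (Ne.symm hne.1) (le_inf inf_le_left hc) hda hdc h
  · exact hsame (Ne.symm hne.2) (le_inf inf_le_right hc) hdb hdc h

theorem IsSectorDecomposition.eq_or_swap_of_inter_eq {p : ℕ} {D : Fin p → Set V}
    (hD : IsSectorDecomposition Set.univ D) {a b a' b' : Fin p} (hne : a' ≠ b')
    (hdim : coneDim (D a ∩ D b) + 1 = Module.finrank ℝ V) (h : D a ∩ D b = D a' ∩ D b') :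
    a' = a ∧ b' = b ∨ a' = b ∧ b' = a := by
  obtain ⟨-, hsec, -, hint⟩ := hD
  choose S hS using fun i => (hsec i).1.1
  set K := fun i => PointedCone.hull ℝ (S i : Set V)
  have hK (i : Fin p) : (K i : Set V) = D i := by rw [hS, coneHull_eq_hull]
  have hspan (i : Fin p) : span ℝ (K i : Set V) = ⊤ := by
    refine eq_top_of_finrank_eq ?_
    rw [hK]
    exact (hsec i).2.2
  have hKint : Pairwise fun i j => interior (↑(K i ⊓ K j) : Set V) = ∅ := fun i j hij => by
    show interior (↑(K i ⊓ K j) : Set V) = ∅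
    rw [coe_inf, hK, hK]
    exact hint i j hij
  have hmem (c : Fin p) (hc : K a ⊓ K b ≤ K c) : c = a ∨ c = b :=
    PointedCone.eq_or_eq_of_inf_le hspan hKint (by rwa [coe_inf, hK, hK]) hc
  have hwall : K a ⊓ K b = K a' ⊓ K b' := SetLike.coe_injective (by simp only [coe_inf, hK, h])
  rcases hmem a' (hwall ▸ inf_le_left) with rfl | rfl <;>
    rcases hmem b' (hwall ▸ inf_le_right) with rfl | rfl <;> simp_all

end Sectors

theorem stmt_4_general (k n m p : ℕ) (hn : 0 < n)
    (C : Set ((Fin k → ℝ) × (Fin n → ℝ)))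
    (hsub : C ⊆ {q : (Fin k → ℝ) × (Fin n → ℝ) | ∀ i, 0 ≤ q.1 i})
    (x : Fin m → (Fin k → ℝ) × (Fin n → ℝ)) (hx : ∀ j, x j ∈ C)
    (J : Fin p → Finset (Fin m)) (hJ : ∀ i, (J i).card = n)
    (Cfam : Fin p → Set ((Fin k → ℝ) × (Fin n → ℝ)))
    (hCfam : ∀ i, Cfam i = coneHull
      ((Set.range fun a : Fin k => ((Pi.single a 1 : Fin k → ℝ), (0 : Fin n → ℝ)))
        ∪ (x '' ↑(J i))))
    (Dfam : Fin p → Set (Fin n → ℝ))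
    (hDfam : ∀ i, Dfam i = coneHull ((fun j => (x j).2) '' ↑(J i)))
    (hDdecomp : IsSectorDecomposition Set.univ Dfam)
    (hwalls : ∀ i l, i ≠ l → IsWallDim (Dfam i) (Dfam l) (n - 1) →
      (J i ∩ J l).card = n - 1 ∧
      Dfam i ∩ Dfam l = coneHull ((fun j => (x j).2) '' ↑(J i ∩ J l))) :
    (∀ i l, i ≠ l →
      (IsWallDim (Cfam i) (Cfam l) (k + n - 1) ↔ IsWallDim (Dfam i) (Dfam l) (n - 1)) ∧
      (IsWallDim (Dfam i) (Dfam l) (n - 1) →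
        Cfam i ∩ Cfam l = coneHull
          ((Set.range fun a : Fin k => ((Pi.single a 1 : Fin k → ℝ), (0 : Fin n → ℝ)))
            ∪ (x '' ↑(J i ∩ J l))))) ∧
    Set.BijOn (fun W => Prod.snd '' W)
      {W | ∃ i l, i ≠ l ∧ W = Cfam i ∩ Cfam l ∧ IsWallDim (Cfam i) (Cfam l) (k + n - 1)}
      {W' | ∃ i l, i ≠ l ∧ W' = Dfam i ∩ Dfam l ∧ IsWallDim (Dfam i) (Dfam l) (n - 1)} := by
  obtain rfl : Cfam = fun i => liftCone x ↑(J i) := funext hCfam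
  obtain rfl : Dfam = fun i => baseCone x ↑(J i) := funext hDfam
  beta_reduce at hDdecomp hwalls ⊢
  have hxnonneg (j : Fin m) : 0 ≤ (x j).1 := hsub (hx j)
  have hli (i : Fin p) : LinearIndepOn ℝ (fun j => (x j).2) ↑(J i) := by
    refine linearIndepOn_of_finrank_span_eq_card ?_
    rw [hJ, ← coneDim_coneHull]
    exact (hDdecomp.2.1 i).2.2.trans (Module.finrank_fin_fun ℝ)
  have hwallC (i l : Fin p) (hil : i ≠ l)
      (hw : IsWallDim (baseCone x ↑(J i)) (baseCone x ↑(J l)) (n - 1)) :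
      liftCone x ↑(J i) ∩ liftCone x ↑(J l) = liftCone x ↑(J i ∩ J l) :=
    liftCone_inter_eq (hli i) (hwalls i l hil hw).2.subset
  have hiff (i l : Fin p) (hil : i ≠ l) := isWallDim_liftCone_iff hxnonneg hn fun hw =>
    hwallC i l hil hw ▸ isCone_liftCone (x := x) (J i ∩ J l)
  refine ⟨fun i l hil => ⟨hiff i l hil, hwallC i l hil⟩, ?_, ?_, ?_⟩
  · rintro _ ⟨i, l, hil, rfl, hW⟩
    exact ⟨i, l, hil, image_snd_liftCone_inter hxnonneg _ _, (hiff i l hil).1 hW⟩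
  · rintro _ ⟨i, l, hil, rfl, hW⟩ _ ⟨i', l', hil', rfl, -⟩ h
    have hdim : coneDim (baseCone x ↑(J i) ∩ baseCone x ↑(J l)) + 1 = n := by
      rw [((hiff i l hil).1 hW).2]
      omega
    rcases hDdecomp.eq_or_swap_of_inter_eq hil' (by rwa [Module.finrank_fin_fun])
        (by simpa only [image_snd_liftCone_inter hxnonneg] using h) with
      ⟨rfl, rfl⟩ | ⟨rfl, rfl⟩
    · rfl
    · exact Set.inter_comm _ _
  · rintro _ ⟨i, l, hil, rfl, hW⟩
    exact ⟨_, ⟨i, l, hil, rfl, (hiff i l hil).2 hW⟩, image_snd_liftCone_inter hxnonneg _ _⟩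

/-- In the setting of the previous lemma, assume in addition that whenever
`D_i ∩ D_ℓ` is a wall in `ℝ^n`, the index intersection `J_i ∩ J_ℓ` has `n−1` elements and
`D_i ∩ D_ℓ = coneHull({π_n(x_j) : j ∈ J_i ∩ J_ℓ})`. Then for distinct `i, ℓ`:
`C_i ∩ C_ℓ` is a wall in `ℝ^k × ℝ^n` iff `D_i ∩ D_ℓ` is a wall in `ℝ^n`, in which case
`C_i ∩ C_ℓ = coneHull({e_1,…,e_k} ∪ {x_j : j ∈ J_i ∩ J_ℓ})`; and `W ↦ π_n(W)` is a
one-to-one correspondence between the walls of `{C_i}` and the walls of `{D_i}`. -/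
theorem stmt_4 (k n m p : ℕ) (hk : 0 < k) (hn : 0 < n) (hm : 0 < m) (hp : 0 < p)
    (hmn : n ≤ m)
    (C : Set ((Fin k → ℝ) × (Fin n → ℝ)))
    (hcone : IsCone C)
    (hsub : C ⊆ {q : (Fin k → ℝ) × (Fin n → ℝ) | ∀ i, 0 ≤ q.1 i})
    (he : ∀ i : Fin k, ((Pi.single i 1 : Fin k → ℝ), (0 : Fin n → ℝ)) ∈ C)
    (hproj : Prod.snd '' C = Set.univ)
    (x : Fin m → (Fin k → ℝ) × (Fin n → ℝ)) (hx : ∀ j, x j ∈ C)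
    (J : Fin p → Finset (Fin m)) (hJ : ∀ i, (J i).card = n)
    (Cfam : Fin p → Set ((Fin k → ℝ) × (Fin n → ℝ)))
    (hCfam : ∀ i, Cfam i = coneHull
      ((Set.range fun a : Fin k => ((Pi.single a 1 : Fin k → ℝ), (0 : Fin n → ℝ)))
        ∪ (x '' ↑(J i))))
    (Dfam : Fin p → Set (Fin n → ℝ))
    (hDfam : ∀ i, Dfam i = coneHull ((fun j => (x j).2) '' ↑(J i)))
    (hCunion : C = ⋃ i, Cfam i)
    (hDdecomp : IsSectorDecomposition Set.univ Dfam)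
    (hwalls : ∀ i l, i ≠ l → IsWallDim (Dfam i) (Dfam l) (n - 1) →
      (J i ∩ J l).card = n - 1 ∧
      Dfam i ∩ Dfam l = coneHull ((fun j => (x j).2) '' ↑(J i ∩ J l))) :
    (∀ i l, i ≠ l →
      (IsWallDim (Cfam i) (Cfam l) (k + n - 1) ↔ IsWallDim (Dfam i) (Dfam l) (n - 1)) ∧
      (IsWallDim (Dfam i) (Dfam l) (n - 1) →
        Cfam i ∩ Cfam l = coneHull
          ((Set.range fun a : Fin k => ((Pi.single a 1 : Fin k → ℝ), (0 : Fin n → ℝ)))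
            ∪ (x '' ↑(J i ∩ J l))))) ∧
    Set.BijOn (fun W => Prod.snd '' W)
      {W | ∃ i l, i ≠ l ∧ W = Cfam i ∩ Cfam l ∧ IsWallDim (Cfam i) (Cfam l) (k + n - 1)}
      {W' | ∃ i l, i ≠ l ∧ W' = Dfam i ∩ Dfam l ∧ IsWallDim (Dfam i) (Dfam l) (n - 1)} :=
  stmt_4_general k n m p hn C hsub x hx J hJ Cfam hCfam Dfam hDfam hDdecomp hwalls
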